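/- Every HGT-free reconciliation is time-consistent: if (T,S,μ) is a reconciliation in which μ(x) and μ(y) are ⪯_S-comparable for every edge xy ∈ E(T), then there exist time maps τ_T for T and τ_S for S such that (T,S,μ,τ_T,τ_S) is a relaxed scenario. -/

import Mathlib

/-- A planted phylogenetic rooted tree, encoded by a parent function on a
finite vertex set.  The root `0_T` is a fixed point of `parent`; every vertex
reaches the root by iterating `parent`; the root has exactly one child
(`planted`); and every inner vertex (non-root vertex having a child) has at
least two children (`phylo`). -/
structure PPTree where
  V : Type
  [fintypeV : Fintype V]
  [decEqV : DecidableEq V]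
  root : V
  parent : V → V
  parent_root : parent root = root
  reach : ∀ v : V, ∃ n : ℕ, parent^[n] v = root
  planted : ∃! v : V, v ≠ root ∧ parent v = root
  phylo : ∀ v : V, v ≠ root → (∃ u, parent u = v ∧ u ≠ v) →
      ∃ u w, parent u = v ∧ parent w = v ∧ u ≠ w ∧ u ≠ v ∧ w ≠ v

attribute [instance] PPTree.fintypeV PPTree.decEqV

namespace PPTree

variable (T : PPTree)

/-- `T.le x y` means `x ⪯_T y`, i.e. `y` is an ancestor of `x` (or `x = y`). -/
def le (x y : T.V) : Prop := ∃ n : ℕ, T.parent^[n] x = y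

/-- `T.lt x y` means `x ≺_T y`. -/
def lt (x y : T.V) : Prop := T.le x y ∧ x ≠ y

/-- Leaves are the `⪯_T`-minimal vertices, i.e. vertices without children. -/
def isLeaf (v : T.V) : Prop := ∀ u, T.parent u = v → u = v

/-- Inner vertices: neither leaves nor the planted root. -/
def inner (v : T.V) : Prop := v ≠ T.root ∧ ¬ T.isLeaf v

/-- The last common ancestor of two vertices: the `⪯_T`-minimal common
ancestor. -/
noncomputable def lca (x y : T.V) : T.V :=
  @Classical.epsilon _ ⟨T.root⟩
    fun v => T.le x v ∧ T.le y v ∧ ∀ w, T.le x w → T.le y w → T.le v w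

/-- The last common ancestor of a set of vertices. -/
noncomputable def lcaSet (A : Set T.V) : T.V :=
  @Classical.epsilon _ ⟨T.root⟩
    fun v => (∀ a ∈ A, T.le a v) ∧ ∀ w, (∀ a ∈ A, T.le a w) → T.le v w

/-- `ρ_T`, the unique child of the planted root. -/
noncomputable def rho : T.V := T.planted.choose

theorem rho_ne_root : T.rho ≠ T.root := T.planted.choose_spec.1.1

/-- Edges of `T`, identified with their child endpoint: the vertex `v ≠ 0_T`
represents the edge `(parent v, v)`. -/
abbrev Edge := {v : T.V // v ≠ T.root}

/-- The union `V(T) ∪ E(T)`. -/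
abbrev VE := T.V ⊕ T.Edge

/-- The ancestor order `⪯_T` extended to `V(T) ∪ E(T)`: for an edge `e = uv`
(`u` the parent of `v`), `x ⪯ e` iff `x ⪯ v`, `e ⪯ x` iff `u ⪯ x`, and
`e ⪯ f` iff the child endpoints are comparable accordingly. -/
def leVE : T.VE → T.VE → Prop
  | Sum.inl x, Sum.inl y => T.le x y
  | Sum.inl x, Sum.inr e => T.le x e.1
  | Sum.inr e, Sum.inl y => T.le (T.parent e.1) y
  | Sum.inr e, Sum.inr f => T.le e.1 f.1

def ltVE (a b : T.VE) : Prop := T.leVE a b ∧ a ≠ b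

/-- Two elements of `V(T) ∪ E(T)` are comparable. -/
def cmpVE (a b : T.VE) : Prop := T.leVE a b ∨ T.leVE b a

/-- Membership in `L(T)` for elements of `V(T) ∪ E(T)`. -/
def isLeafVE : T.VE → Prop
  | Sum.inl v => T.isLeaf v
  | Sum.inr _ => False

/-- Map an element of `V(T) ∪ E(T)` to a vertex (an edge `uv` is sent to its
child endpoint `v`). -/
def toVertex : T.VE → T.V
  | Sum.inl v => v
  | Sum.inr e => e.1

end PPTree

/-- Axioms (R0)–(R3) of a reconciliation map `μ : V(T) → V(S) ∪ E(S)`. -/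
structure IsRecon (T S : PPTree) (μ : T.V → S.VE) : Prop where
  R0 : ∀ x, μ x = Sum.inl S.root ↔ x = T.root
  R1 : ∀ x, S.isLeafVE (μ x) ↔ T.isLeaf x
  R2 : ∀ x y, T.lt y x → (∃ u, μ x = Sum.inl u) → (∃ v, μ y = Sum.inl v) → μ x ≠ μ y
  R3 : ∀ x y, T.lt y x → ¬ S.ltVE (μ x) (μ y)

/-- A reconciliation is HGT-free if the images of the endpoints of every edge
of `T` are `⪯_S`-comparable. -/
def IsHGTFree (T S : PPTree) (μ : T.V → S.VE) : Prop :=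
  ∀ v : T.V, v ≠ T.root → S.cmpVE (μ (T.parent v)) (μ v)

/-- `(T,S,μ,σ)` is a σ-reconciliation when `μ` restricted to `L(T)` equals
`σ`. -/
def SigmaCompat (T S : PPTree) (μ : T.V → S.VE) (σ : T.V → S.V) : Prop :=
  ∀ x, T.isLeaf x → μ x = Sum.inl (σ x)

/-- A time map for `T`. -/
def IsTimeMap (T : PPTree) (τ : T.V → ℝ) : Prop :=
  ∀ x y, T.lt x y → τ x < τ y

/-- Axioms (S0)–(S3) of a relaxed scenario `(T,S,μ,τ_T,τ_S)`. -/
structure IsRelaxedScenario (T S : PPTree) (μ : T.V → S.VE)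
    (τT : T.V → ℝ) (τS : S.V → ℝ) : Prop where
  timeT : IsTimeMap T τT
  timeS : IsTimeMap S τS
  S0 : ∀ x, μ x = Sum.inl S.root ↔ x = T.root
  S1 : ∀ x, S.isLeafVE (μ x) ↔ T.isLeaf x
  S2 : ∀ x v, μ x = Sum.inl v → τS v = τT x
  S3 : ∀ x (e : S.Edge), μ x = Sum.inr e → τS e.1 < τT x ∧ τT x < τS (S.parent e.1)

/-!
In an HGT-free reconciliation every edge `xy` of `T` satisfies `μ(y) ⪯_S μ(x)`: the images are
comparable, and (R3) excludes the strict reverse order. Hence `μ` is monotone along `T`. Give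
each vertex `v` of `S` the time `-2·depth(v)` and each edge the midpoint `-2·depth(child) + 1`
of its endpoints' times; distinct comparable elements of `V(S) ∪ E(S)` are then at least one unit
apart. A gene mapped to a vertex takes that vertex's time. A gene mapped to an edge takes the
edge's time plus an offset in `(0, 1/2)` that decreases with its depth in `T`, which orders the
chains of genes lying on the same edge; (R2) forbids such chains on a vertex.
-/

namespace PPTree

variable {T : PPTree}

theorem le.refl (x : T.V) : T.le x x := ⟨0, rfl⟩

theorem le.trans {x y z : T.V} (hxy : T.le x y) (hyz : T.le y z) : T.le x z := by
  obtain ⟨n, rfl⟩ := hxy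
  obtain ⟨m, rfl⟩ := hyz
  exact ⟨m + n, Function.iterate_add_apply _ _ _ _⟩

theorem le_parent (x : T.V) : T.le x (T.parent x) := ⟨1, rfl⟩

theorem le.eq_or_parent_le {x y : T.V} (h : T.le x y) : x = y ∨ T.le (T.parent x) y := by
  obtain ⟨_ | n, rfl⟩ := h
  · exact Or.inl rfl
  · exact Or.inr ⟨n, (Function.iterate_succ_apply _ _ _).symm⟩

theorem parent_ne_self {v : T.V} (hv : v ≠ T.root) : T.parent v ≠ v := fun h => by
  obtain ⟨n, hn⟩ := T.reach v
  exact hv (Function.iterate_fixed h n ▸ hn)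

theorem eq_root_of_root_le {y : T.V} (h : T.le T.root y) : y = T.root := by
  obtain ⟨n, rfl⟩ := h
  exact Function.iterate_fixed T.parent_root n

theorem rel_of_le {α : Type*} {r : α → α → Prop} [IsPreorder α r] {f : T.V → α}
    (hf : ∀ z, z ≠ T.root → r (f z) (f (T.parent z))) {x y : T.V} (h : T.le x y) :
    r (f x) (f y) := by
  obtain ⟨n, rfl⟩ := h
  induction n with
  | zero => exact refl _
  | succ n ih =>
    rw [Function.iterate_succ_apply']
    by_cases hroot : T.parent^[n] x = T.root
    · rw [hroot, T.parent_root]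
      exact hroot ▸ ih
    · exact _root_.trans ih (hf _ hroot)

noncomputable def depth (T : PPTree) (v : T.V) : ℕ := Nat.find (T.reach v)

theorem depth_parent {v : T.V} (hv : v ≠ T.root) : T.depth v = T.depth (T.parent v) + 1 := by
  have hspec : ∀ w : T.V, T.parent^[T.depth w] w = T.root := fun w => Nat.find_spec (T.reach w)
  obtain ⟨k, hk⟩ : ∃ k, T.depth v = k + 1 :=
    Nat.exists_eq_succ_of_ne_zero fun h0 => hv ((Nat.find_eq_zero _).1 h0)
  have hle : T.depth (T.parent v) ≤ k :=
    Nat.find_le (by simpa [hk, Function.iterate_succ_apply] using hspec v)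
  have hge : T.depth v ≤ T.depth (T.parent v) + 1 :=
    Nat.find_le (by rw [Function.iterate_succ_apply]; exact hspec _)
  omega

theorem depth_le_of_le {x y : T.V} (h : T.le x y) : T.depth y ≤ T.depth x :=
  rel_of_le (r := (· ≥ ·)) (fun _ hz => (depth_parent hz).symm ▸ Nat.le_succ _) h

theorem depth_lt_of_lt {x y : T.V} (h : T.lt x y) : T.depth y < T.depth x := by
  obtain ⟨hle, hne⟩ := h
  rcases hle.eq_or_parent_le with rfl | hparent
  · exact absurd rfl hne
  · have hx : x ≠ T.root := by
      rintro rfl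
      exact hne (eq_root_of_root_le hle).symm
    have := depth_le_of_le hparent
    rw [depth_parent hx]
    omega

instance : IsPreorder T.VE T.leVE where
  refl a := by cases a <;> exact le.refl _
  trans a b c := by
    rcases a with x | e <;> rcases b with y | f <;> rcases c with z | g <;>
      simp only [leVE] <;> intro h₁ h₂
    case inr.inr.inl =>
      rcases h₁.eq_or_parent_le with heq | hparent
      · exact heq ▸ h₂
      · exact hparent.trans ((le_parent _).trans h₂)
    all_goals first
      | exact h₁.trans h₂
      | exact h₁.trans ((le_parent _).trans h₂)
      | exact (le_parent _).trans (h₁.trans h₂)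

noncomputable def timeVE (T : PPTree) : T.VE → ℝ
  | Sum.inl v => -2 * T.depth v
  | Sum.inr e => -2 * T.depth e.1 + 1

theorem timeVE_add_one_le {a b : T.VE} (h : T.leVE a b) (hne : a ≠ b) :
    T.timeVE a + 1 ≤ T.timeVE b := by
  rcases a with x | e <;> rcases b with y | f <;> simp only [leVE] at h <;> simp only [timeVE]
  · have : T.depth y < T.depth x := depth_lt_of_lt ⟨h, fun hxy => hne (hxy ▸ rfl)⟩
    have : (T.depth y : ℝ) + 1 ≤ T.depth x := by exact_mod_cast this
    linarith
  · have : (T.depth f.1 : ℝ) ≤ T.depth x := by exact_mod_cast depth_le_of_le h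
    linarith
  · have : T.depth y + 1 ≤ T.depth e.1 :=
      depth_parent e.2 ▸ Nat.succ_le_succ (depth_le_of_le h)
    have : (T.depth y : ℝ) + 1 ≤ T.depth e.1 := by exact_mod_cast this
    linarith
  · have : T.depth f.1 < T.depth e.1 :=
      depth_lt_of_lt ⟨h, fun hef => hne (congrArg Sum.inr (Subtype.ext hef))⟩
    have : (T.depth f.1 : ℝ) + 1 ≤ T.depth e.1 := by exact_mod_cast this
    linarith

theorem isTimeMap_timeVE_inl : IsTimeMap T fun v => T.timeVE (Sum.inl v) := fun x y h => by
  have := timeVE_add_one_le (a := Sum.inl x) (b := Sum.inl y) h.1 (h.2 ∘ Sum.inl.inj)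
  linarith

end PPTree

open PPTree

section Reconciliation

variable {T S : PPTree} {μ : T.V → S.VE}

theorem IsRecon.leVE_of_le (hrec : IsRecon T S μ) (hfree : IsHGTFree T S μ) {x y : T.V}
    (h : T.le x y) : S.leVE (μ x) (μ y) := by
  refine rel_of_le (fun z hz => ?_) h
  rcases hfree z hz with hup | hdown
  · by_cases heq : μ (T.parent z) = μ z
    · exact heq ▸ refl _
    · have hlt : T.lt z (T.parent z) := ⟨le_parent z, fun h => parent_ne_self hz h.symm⟩
      exact absurd ⟨hup, heq⟩ (hrec.R3 _ _ hlt)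
  · exact hdown

variable (T S μ) in
noncomputable def edgeOffset (x : T.V) : ℝ :=
  Sum.elim (fun _ => 0) (fun _ => 1 / (T.depth x + 3)) (μ x)

variable (T S μ) in
noncomputable def reconTime (x : T.V) : ℝ := S.timeVE (μ x) + edgeOffset T S μ x

theorem edgeOffset_nonneg (x : T.V) : 0 ≤ edgeOffset T S μ x := by
  unfold edgeOffset
  cases μ x <;> simp only [Sum.elim_inl, Sum.elim_inr] <;> positivity

theorem edgeOffset_lt_half (x : T.V) : edgeOffset T S μ x < 1 / 2 := by
  unfold edgeOffset
  cases μ x <;> simp only [Sum.elim_inl, Sum.elim_inr]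
  · norm_num
  · rw [one_div_lt_one_div (by positivity) two_pos]
    linarith [(T.depth x).cast_nonneg (α := ℝ)]

theorem isTimeMap_reconTime (hrec : IsRecon T S μ) (hfree : IsHGTFree T S μ) :
    IsTimeMap T (reconTime T S μ) := by
  intro y x hyx
  by_cases heq : μ y = μ x
  · rcases hx : μ x with v | e
    · exact absurd heq.symm (hrec.R2 x y hyx ⟨v, hx⟩ ⟨v, heq.trans hx⟩)
    · have : (T.depth x : ℝ) < T.depth y := by exact_mod_cast depth_lt_of_lt hyx
      simp only [reconTime, edgeOffset, heq, hx, Sum.elim_inr]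
      gcongr
  · have := timeVE_add_one_le (hrec.leVE_of_le hfree hyx.1) heq
    have := edgeOffset_nonneg (S := S) (μ := μ) x
    have := edgeOffset_lt_half (S := S) (μ := μ) y
    unfold reconTime
    linarith

end Reconciliation

/-- Every HGT-free reconciliation is time-consistent: if
`(T,S,μ)` is a reconciliation in which `μ(x)` and `μ(y)` are `⪯_S`-comparable
for every edge `xy ∈ E(T)`, then there exist time maps `τ_T` and `τ_S` such
that `(T,S,μ,τ_T,τ_S)` is a relaxed scenario. -/
theorem HGTfree_recon_time_consistent
    (T S : PPTree) (μ : T.V → S.VE)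
    (hrec : IsRecon T S μ) (hfree : IsHGTFree T S μ) :
    ∃ (τT : T.V → ℝ) (τS : S.V → ℝ), IsRelaxedScenario T S μ τT τS := by
  refine ⟨reconTime T S μ, fun v => S.timeVE (Sum.inl v), isTimeMap_reconTime hrec hfree,
    isTimeMap_timeVE_inl, hrec.R0, hrec.R1, fun x v hv => ?_, fun x e he => ?_⟩
  · simp [reconTime, edgeOffset, hv]
  · have hdepth : (S.depth e.1 : ℝ) = S.depth (S.parent e.1) + 1 := by
      exact_mod_cast depth_parent e.2
    have := edgeOffset_lt_half (S := S) (μ := μ) x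
    have hoff : 0 < edgeOffset T S μ x := by simp only [edgeOffset, he, Sum.elim_inr]; positivity
    simp only [reconTime, timeVE, he]
    constructor <;> linarith
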